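/- If S is a set of points in the Euclidean plane ℝ² such that the Euclidean distance between any two points of S is an integer, and S is not collinear (i.e., S contains three points not lying on a common line), then S is finite. -/

import Mathlib

/-!
Fix three non-collinear points `A`, `B`, `C` of `S`. For `P ∈ S` the differences `PA - PB` and
`PA - PC` are integers bounded by `AB` and `AC`, so `S` is covered by finitely many sets
`{P | PA - PB = j ∧ PA - PC = k}`. Writing `d = PA`, squaring `PB = d - j` and `PC = d - k` and
subtracting `PA² = d²` gives two equations that are linear in `P - A` and `d`; as `B - A` and
`C - A` span the plane, they determine `P - A = x₀ + d • w`. Then `‖x₀ + d • w‖ = d` is a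
quadratic equation for `d`, which vanishes identically only if `B - A` and `C - A` are both
multiples of the unit vector `w`.
-/

open scoped RealInnerProductSpace
open Module

theorem Polynomial.finite_setOf_quadratic_eq_zero {a b c : ℝ} (h : a ≠ 0 ∨ b ≠ 0 ∨ c ≠ 0) :
    {t : ℝ | a * t ^ 2 + b * t + c = 0}.Finite := by
  have hp : C a * X ^ 2 + C b * X + C c ≠ 0 := by
    intro hp
    have h2 := congrArg (coeff · 2) hp
    have h1 := congrArg (coeff · 1) hp
    have h0 := congrArg (coeff · 0) hp
    simp only [coeff_add, coeff_C_mul_X_pow, coeff_C_mul_X, coeff_C, coeff_zero] at h2 h1 h0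
    norm_num at h2 h1 h0
    tauto
  simpa using finite_setOfPred_isRoot hp

theorem dist_sub_dist_mem_image_Icc {α : Type*} [PseudoMetricSpace α] {P A B : α} {a b m : ℤ}
    (ha : dist P A = a) (hb : dist P B = b) (hm : dist A B = m) :
    dist P A - dist P B ∈ ((↑) '' Set.Icc (-m) m : Set ℝ) := by
  have hbound : |(a - b : ℝ)| ≤ m := by
    rw [← ha, ← hb, ← hm, dist_comm P A, dist_comm P B]
    exact abs_dist_sub_le A B P
  exact ⟨a - b, abs_le.mp (by exact_mod_cast hbound), by push_cast [ha, hb]; rfl⟩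

section Collinear

variable {k V P : Type*} [Field k] [AddCommGroup V] [Module k V] [AddTorsor V P]

theorem collinear_of_forall_collinear_triple {s : Set P}
    (h : ∀ a ∈ s, ∀ b ∈ s, ∀ c ∈ s, Collinear k ({a, b, c} : Set P)) : Collinear k s := by
  rcases s.subsingleton_or_nontrivial with hs | ⟨a, ha, b, hb, hab⟩
  · rcases hs.eq_empty_or_singleton with rfl | ⟨a, rfl⟩
    · exact collinear_empty k P
    · exact collinear_singleton k a
  rw [collinear_iff_of_mem ha]
  refine ⟨b -ᵥ a, fun p hp => ?_⟩
  have hp' := (h a ha b hb p hp).mem_affineSpan_of_mem_of_ne (p₃ := p) (by simp) (by simp)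
    (by simp) hab
  rw [← vsub_vadd p a, vadd_left_mem_affineSpan_pair] at hp'
  obtain ⟨r, hr⟩ := hp'
  exact ⟨r, by rw [hr, vsub_vadd]⟩

theorem collinear_of_vsub_eq_smul {A B C : P} {w : V} {r s : k} (hB : B -ᵥ A = r • w)
    (hC : C -ᵥ A = s • w) : Collinear k ({A, B, C} : Set P) := by
  rw [collinear_iff_of_mem (Set.mem_insert A _)]
  refine ⟨w, ?_⟩
  rintro p (rfl | rfl | rfl)
  · exact ⟨0, by simp⟩
  · exact ⟨r, by rw [← hB, vsub_vadd]⟩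
  · exact ⟨s, by rw [← hC, vsub_vadd]⟩

end Collinear

section InnerProductSpace

variable {V : Type*} [NormedAddCommGroup V] [InnerProductSpace ℝ V]

theorem two_inner_sub_eq_of_dist_sub_dist_eq {P A B : V} {j : ℝ}
    (h : dist P A - dist P B = j) :
    2 * ⟪B - A, P - A⟫ = ‖B - A‖ ^ 2 - j ^ 2 + 2 * j * dist P A := by
  have hB : ‖(B - A) - (P - A)‖ ^ 2 = (dist P A - j) ^ 2 := by
    rw [sub_sub_sub_cancel_right, ← dist_eq_norm, dist_comm, ← h, sub_sub_cancel]
  rw [norm_sub_sq_real, ← dist_eq_norm P] at hB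
  linear_combination -hB

theorem eq_smul_of_norm_eq_one_of_inner_eq {u w : V} {r : ℝ} (hw : ‖w‖ = 1) (huw : ⟪u, w⟫ = r)
    (hu : ‖u‖ ^ 2 = r ^ 2) : u = r • w := by
  rw [← sub_eq_zero, ← norm_eq_zero, ← sq_eq_zero_iff, norm_sub_sq_real, inner_smul_right, huw,
    norm_smul, hw, hu, Real.norm_eq_abs, mul_one, sq_abs]
  ring

theorem eq_zero_of_inner_sub_eq_zero (hV : finrank ℝ V = 2) {A B C : V}
    (h : ¬Collinear ℝ ({A, B, C} : Set V)) {x : V} (hB : ⟪B - A, x⟫ = 0) (hC : ⟪C - A, x⟫ = 0) :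
    x = 0 := by
  have : FiniteDimensional ℝ V := Module.finite_of_finrank_eq_succ hV
  have hspan : vectorSpan ℝ ({A, B, C} : Set V) = ⊤ := by
    rw [collinear_iff_finrank_le_one, not_le] at h
    exact Submodule.eq_top_of_finrank_eq (le_antisymm (Submodule.finrank_le _) (by omega))
  have hle : vectorSpan ℝ ({A, B, C} : Set V) ≤ (ℝ ∙ x)ᗮ := by
    rw [vectorSpan_eq_span_vsub_set_right ℝ (Set.mem_insert A _), Submodule.span_le]
    rintro _ ⟨p, hp, rfl⟩
    simp only [SetLike.mem_coe, Submodule.mem_orthogonal_singleton_iff_inner_left, vsub_eq_sub]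
    rcases hp with rfl | rfl | rfl
    · simp
    · exact hB
    · exact hC
  rwa [hspan, top_le_iff, Submodule.orthogonal_eq_top_iff, Submodule.span_singleton_eq_bot] at hle

theorem exists_inner_sub_eq (hV : finrank ℝ V = 2) {A B C : V}
    (h : ¬Collinear ℝ ({A, B, C} : Set V)) (a b : ℝ) :
    ∃ x : V, ⟪B - A, x⟫ = a ∧ ⟪C - A, x⟫ = b := by
  have : FiniteDimensional ℝ V := Module.finite_of_finrank_eq_succ hV
  let L : V →ₗ[ℝ] ℝ × ℝ := (innerₗ V (B - A)).prod (innerₗ V (C - A))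
  have hL : ∀ x, L x = (⟪B - A, x⟫, ⟪C - A, x⟫) := fun _ => rfl
  have hinj : Function.Injective L := by
    rw [← LinearMap.ker_eq_bot, LinearMap.ker_eq_bot']
    intro x hx
    rw [hL, Prod.mk_eq_zero] at hx
    exact eq_zero_of_inner_sub_eq_zero hV h hx.1 hx.2
  obtain ⟨x, hx⟩ :=
    (LinearMap.injective_iff_surjective_of_finrank_eq_finrank (by simp [hV])).mp hinj (a, b)
  exact ⟨x, by simpa [hL] using hx⟩

theorem finite_setOf_dist_sub_dist_eq (hV : finrank ℝ V = 2) {A B C : V}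
    (h : ¬Collinear ℝ ({A, B, C} : Set V)) (j k : ℝ) :
    {P : V | dist P A - dist P B = j ∧ dist P A - dist P C = k}.Finite := by
  obtain ⟨x₀, hx₀B, hx₀C⟩ := exists_inner_sub_eq hV h ((‖B - A‖ ^ 2 - j ^ 2) / 2)
    ((‖C - A‖ ^ 2 - k ^ 2) / 2)
  obtain ⟨w, hwB, hwC⟩ := exists_inner_sub_eq hV h j k
  have hparam : ∀ P, dist P A - dist P B = j → dist P A - dist P C = k →
      P - A = x₀ + dist P A • w := by
    intro P hj hk
    have h1 := two_inner_sub_eq_of_dist_sub_dist_eq hj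
    have h2 := two_inner_sub_eq_of_dist_sub_dist_eq hk
    rw [← sub_eq_zero]
    apply eq_zero_of_inner_sub_eq_zero hV h
    · rw [inner_sub_right, inner_add_right, inner_smul_right, hx₀B, hwB]; linarith
    · rw [inner_sub_right, inner_add_right, inner_smul_right, hx₀C, hwC]; linarith
  have hnondeg : ‖w‖ ^ 2 - 1 ≠ 0 ∨ 2 * ⟪x₀, w⟫ ≠ 0 ∨ ‖x₀‖ ^ 2 ≠ 0 := by
    by_contra! ⟨hw, -, hx₀⟩
    rw [sq_eq_zero_iff, norm_eq_zero] at hx₀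
    subst hx₀
    have hw1 : ‖w‖ = 1 := by nlinarith [norm_nonneg w]
    rw [inner_zero_right] at hx₀B hx₀C
    exact h (collinear_of_vsub_eq_smul
      (eq_smul_of_norm_eq_one_of_inner_eq (u := B - A) hw1 hwB (by linarith))
      (eq_smul_of_norm_eq_one_of_inner_eq (u := C - A) hw1 hwC (by linarith)))
  refine ((Polynomial.finite_setOf_quadratic_eq_zero hnondeg).image
    (fun d => A + x₀ + d • w)).subset ?_
  rintro P ⟨hj, hk⟩
  have hP := hparam P hj hk
  refine ⟨dist P A, ?_, by simp only [add_assoc, ← hP, add_sub_cancel]⟩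
  have hd : ‖x₀ + dist P A • w‖ ^ 2 = dist P A ^ 2 := by rw [← hP, dist_eq_norm]
  rw [norm_add_sq_real, inner_smul_right, norm_smul, mul_pow, Real.norm_eq_abs, sq_abs] at hd
  simp only [Set.mem_ofPred_eq]
  linear_combination hd

theorem finite_setOf_dist_sub_dist_mem (hV : finrank ℝ V = 2) {A B C : V}
    (h : ¬Collinear ℝ ({A, B, C} : Set V)) {T₁ T₂ : Set ℝ} (h₁ : T₁.Finite) (h₂ : T₂.Finite) :
    {P : V | dist P A - dist P B ∈ T₁ ∧ dist P A - dist P C ∈ T₂}.Finite := by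
  refine (h₁.biUnion fun j _ => h₂.biUnion fun k _ =>
    finite_setOf_dist_sub_dist_eq hV h j k).subset ?_
  rintro P ⟨hj, hk⟩
  simp only [Set.mem_iUnion]
  exact ⟨_, hj, _, hk, rfl, rfl⟩

end InnerProductSpace

/-- A set of points in the Euclidean plane with pairwise integral distances
which is not collinear is finite. -/
theorem finite_of_integral_distances_not_collinear
    (S : Set (EuclideanSpace ℝ (Fin 2)))
    (hdist : ∀ p ∈ S, ∀ q ∈ S, ∃ n : ℤ, dist p q = (n : ℝ))
    (hcol : ¬ Collinear ℝ S) :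
    S.Finite := by
  obtain ⟨A, hA, B, hB, C, hC, hABC⟩ :
      ∃ A ∈ S, ∃ B ∈ S, ∃ C ∈ S, ¬Collinear ℝ ({A, B, C} : Set (EuclideanSpace ℝ (Fin 2))) := by
    by_contra! h
    exact hcol (collinear_of_forall_collinear_triple h)
  obtain ⟨m, hm⟩ := hdist A hA B hB
  obtain ⟨n, hn⟩ := hdist A hA C hC
  refine (finite_setOf_dist_sub_dist_mem finrank_euclideanSpace_fin hABC
    ((Set.finite_Icc (-m) m).image ((↑) : ℤ → ℝ))
    ((Set.finite_Icc (-n) n).image ((↑) : ℤ → ℝ))).subset ?_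
  intro P hP
  obtain ⟨a, ha⟩ := hdist P hP A hA
  obtain ⟨b, hb⟩ := hdist P hP B hB
  obtain ⟨c, hc⟩ := hdist P hP C hC
  exact ⟨dist_sub_dist_mem_image_Icc ha hb hm, dist_sub_dist_mem_image_Icc ha hc hn⟩
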